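/- arXiv:1707.08918 — 2 statements merged into one kernel-verified Lean document; each statement's English description precedes it below -/
import Mathlib

section
/- Let G be a (house, bull)-free graph and let M be a module of G that is not a stable set, and let k = cc(G[M]). Let G_M be the graph obtained from G by deleting M and adding a stable set S_M of k new vertices, each adjacent exactly to those vertices of V(G)∖M that are adjacent to M (i.e., complete to M in G). Then G_M is (house, bull)-free and |V(G_M)| < |V(G)|. -/
/-!
Fix `m₀ ∈ M`. Because `M` is homogeneous, `G_M` is the pullback of `G` along the map that is the
identity on `V ∖ M` and sends every new vertex to `m₀`. An induced copy of `F` in a pullback maps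
onto an induced copy of `F` in `G` unless the map identifies two of its vertices, and any two
vertices it identifies are non-adjacent twins; the house and the bull have no such pair. The
vertex count drops because an edge `uv` inside `M` gives a clique cover of `G[M]` by `{u, v}` and
singletons, so `cc(G[M]) < |M|`.
-/

open SimpleGraph

/-- The bull graph: vertices a,b,c,d,e = 0,1,2,3,4; edges ab,bc,cd,be,ce. -/
def bull : SimpleGraph (Fin 5) :=
  SimpleGraph.fromEdgeSet {s(0,1), s(1,2), s(2,3), s(1,4), s(2,4)}

/-- The house graph: complement of the path on five vertices. -/
def house : SimpleGraph (Fin 5) := (SimpleGraph.pathGraph 5)ᶜ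

/-- `G` contains no induced subgraph isomorphic to `F`. -/
def FreeOf {V W : Type*} (G : SimpleGraph V) (F : SimpleGraph W) : Prop :=
  ¬ ∃ f : W ↪ V, ∀ a b : W, G.Adj (f a) (f b) ↔ F.Adj a b

/-- A homogeneous set: every outside vertex is complete or anticomplete to it. -/
def IsHomogSet {V : Type*} (G : SimpleGraph V) (S : Set V) : Prop :=
  ∀ v ∉ S, (∀ s ∈ S, G.Adj v s) ∨ (∀ s ∈ S, ¬ G.Adj v s)

/-- A proper homogeneous set: at least two vertices and not all of `V`. -/
def IsProperHomogSet {V : Type*} (G : SimpleGraph V) (S : Set V) : Prop :=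
  IsHomogSet G S ∧ S.Nontrivial ∧ S ≠ Set.univ

/-- A stable (independent) set. -/
def IsStableSet {V : Type*} (G : SimpleGraph V) (S : Set V) : Prop :=
  S.Pairwise fun u v => ¬ G.Adj u v

/-- A module: a nonempty homogeneous set that overlaps no homogeneous set. -/
def IsModuleSet {V : Type*} (G : SimpleGraph V) (M : Set V) : Prop :=
  M.Nonempty ∧ IsHomogSet G M ∧
    ∀ S : Set V, IsHomogSet G S → S ⊆ M ∨ M ⊆ S ∨ S ∩ M = ∅

/-- A quasi-maximal module: a module, different from `V`, such that the only
module strictly containing it is `V`. -/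
def IsQuasiMaxModule {V : Type*} (G : SimpleGraph V) (M : Set V) : Prop :=
  IsModuleSet G M ∧ M ≠ Set.univ ∧
    ∀ S : Set V, IsModuleSet G S → M ⊂ S → S = Set.univ

/-- A clique cover: a partition of the vertex set into cliques. -/
def IsCliqueCover {V : Type*} (G : SimpleGraph V) (C : Set (Set V)) : Prop :=
  Setoid.IsPartition C ∧ ∀ Q ∈ C, G.IsClique Q

/-- `cc G`: the minimum number of cliques in a clique cover of `G`. -/
noncomputable def cliqueCoverNumber {V : Type*} (G : SimpleGraph V) : ℕ :=
  sInf {n | ∃ C : Set (Set V), IsCliqueCover G C ∧ C.ncard = n}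

/-- `S` is complete to `T`: every vertex of `S` is adjacent to every vertex of `T`. -/
def CompleteTo {V : Type*} (G : SimpleGraph V) (S T : Set V) : Prop :=
  ∀ s ∈ S, ∀ t ∈ T, G.Adj s t

/-- `S` is anticomplete to `T`: no vertex of `S` is adjacent to a vertex of `T`. -/
def AnticompleteTo {V : Type*} (G : SimpleGraph V) (S T : Set V) : Prop :=
  ∀ s ∈ S, ∀ t ∈ T, ¬ G.Adj s t

/-- The 5-tuple setup from the paper: five nonempty pairwise disjoint sets
`A 0, …, A 4` (corresponding to `A_1, …, A_5`, indices modulo 5) with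
`A i` complete to `A (i+1)` for `i ∈ {0,1,2,3}`, `A i` anticomplete to
`A (i+2)` for all `i`, and `A 4` complete or anticomplete to `A 0`. -/
def GoodTuple {V : Type*} (G : SimpleGraph V) (A : Fin 5 → Set V) : Prop :=
  (∀ i, (A i).Nonempty) ∧
  (Pairwise fun i j => Disjoint (A i) (A j)) ∧
  (∀ i : Fin 5, i ≠ 4 → CompleteTo G (A i) (A (i + 1))) ∧
  (∀ i : Fin 5, AnticompleteTo G (A i) (A (i + 2))) ∧
  (CompleteTo G (A 4) (A 0) ∨ AnticompleteTo G (A 4) (A 0))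

/-- A good tuple whose union `A` is inclusionwise maximal among all good tuples. -/
def MaximalGoodTuple {V : Type*} (G : SimpleGraph V) (A : Fin 5 → Set V) : Prop :=
  GoodTuple G A ∧ ∀ A' : Fin 5 → Set V, GoodTuple G A' → ¬ (⋃ i, A i) ⊂ (⋃ i, A' i)

/-- The set `B` of vertices outside `A` that are complete to `A`. -/
def Bset {V : Type*} (G : SimpleGraph V) (A : Fin 5 → Set V) : Set V :=
  {v | v ∉ (⋃ i, A i) ∧ ∀ a ∈ ⋃ i, A i, G.Adj v a}

/-- The graph obtained from `G` by deleting `M` and adding a stable set of `k`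
new vertices, each adjacent exactly to those vertices of `V ∖ M` that are
complete to `M` in `G`. -/
def replaceByStable {V : Type*} (G : SimpleGraph V) (M : Set V) (k : ℕ) :
    SimpleGraph ((↥(Mᶜ : Set V)) ⊕ Fin k) where
  Adj x y :=
    match x, y with
    | Sum.inl a, Sum.inl b => G.Adj a b
    | Sum.inl a, Sum.inr _ => ∀ m ∈ M, G.Adj a m
    | Sum.inr _, Sum.inl b => ∀ m ∈ M, G.Adj b m
    | Sum.inr _, Sum.inr _ => False
  symm := by
    constructor
    rintro (a | i) (b | j) h
    · exact G.adj_symm h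
    · exact h
    · exact h
    · exact h.elim
  loopless := by
    constructor
    rintro (a | i) h
    · exact G.irrefl h
    · exact h

def FalseTwinFree {W : Type*} (F : SimpleGraph W) : Prop :=
  ∀ ⦃a b : W⦄, ¬ F.Adj a b → (∀ c, F.Adj a c ↔ F.Adj b c) → a = b

lemma house_falseTwinFree : FalseTwinFree house := by
  unfold FalseTwinFree
  simp only [house, compl_adj, pathGraph_adj]
  decide

lemma bull_falseTwinFree : FalseTwinFree bull := by
  unfold FalseTwinFree
  simp only [bull, fromEdgeSet_adj, Set.mem_insert_iff, Set.mem_singleton_iff]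
  decide

lemma FreeOf.comap {V V' W : Type*} {G : SimpleGraph V} {F : SimpleGraph W}
    (hG : FreeOf G F) (hF : FalseTwinFree F) (g : V' → V) : FreeOf (G.comap g) F := by
  rintro ⟨f, hf⟩
  have hinj : Function.Injective (g ∘ f) := by
    intro a b hab
    change g (f a) = g (f b) at hab
    refine hF (fun h => ?_) fun c => ?_
    · have hloop := (hf a b).2 h
      rw [comap_adj, hab] at hloop
      exact G.irrefl hloop
    · rw [← hf, ← hf, comap_adj, comap_adj, hab]
  exact hG ⟨⟨g ∘ f, hinj⟩, hf⟩

lemma IsHomogSet.adj_iff_forall {V : Type*} {G : SimpleGraph V} {M : Set V}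
    (hM : IsHomogSet G M) {m₀ v : V} (hm₀ : m₀ ∈ M) (hv : v ∉ M) :
    G.Adj v m₀ ↔ ∀ m ∈ M, G.Adj v m :=
  ⟨fun h => (hM v hv).resolve_right fun hanti => hanti m₀ hm₀ h, fun h => h m₀ hm₀⟩

lemma replaceByStable_eq_comap {V : Type*} {G : SimpleGraph V} {M : Set V}
    (hM : IsHomogSet G M) {m₀ : V} (hm₀ : m₀ ∈ M) (k : ℕ) :
    replaceByStable G M k = G.comap (Sum.elim Subtype.val fun _ => m₀) := by
  ext (a | i) (b | j)
  · rfl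
  · exact (hM.adj_iff_forall hm₀ a.2).symm
  · exact (hM.adj_iff_forall hm₀ b.2).symm.trans (G.adj_comm _ _)
  · simp [replaceByStable]

lemma cliqueCoverNumber_le_of_isClique_fiber {W β : Type*} [Finite β] {H : SimpleGraph W}
    (φ : W → β) (hφ : ∀ b, H.IsClique (φ ⁻¹' {b})) :
    cliqueCoverNumber H ≤ Nat.card β := by
  have hcover : IsCliqueCover H (Setoid.ker φ).classes := by
    refine ⟨Setoid.isPartition_classes _, ?_⟩
    rintro _ ⟨y, rfl⟩
    exact hφ (φ y)
  calc cliqueCoverNumber H ≤ (Setoid.ker φ).classes.ncard := Nat.sInf_le ⟨_, hcover, rfl⟩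
    _ ≤ (Set.range fun b => {x | φ x = b}).ncard :=
      Set.ncard_le_ncard (Setoid.classes_ker_subset_fiber_set φ) (Set.finite_range _)
    _ ≤ Nat.card β := by rw [← Nat.card_coe_set_eq]; exact Finite.card_range_le _

lemma cliqueCoverNumber_lt_card {W : Type*} [Finite W] {H : SimpleGraph W} {u v : W}
    (huv : H.Adj u v) : cliqueCoverNumber H < Nat.card W := by
  classical
  let φ : W → ↥({v}ᶜ : Set W) := fun x => if hx : x = v then ⟨u, huv.ne⟩ else ⟨x, hx⟩
  have hφ : ∀ b, H.IsClique (φ ⁻¹' {b}) := by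
    intro b x hx y hy hxy
    have hφxy : φ x = φ y := hx.trans hy.symm
    by_cases hxv : x = v <;> by_cases hyv : y = v <;>
      simp only [φ, hxv, hyv, dite_true, dite_false, Subtype.ext_iff] at hφxy
    · exact absurd (hxv.trans hyv.symm) hxy
    · rw [hxv, ← hφxy]; exact huv.symm
    · rw [hyv, hφxy]; exact huv
    · exact absurd hφxy hxy
  calc cliqueCoverNumber H ≤ Nat.card ↥({v}ᶜ : Set W) :=
        cliqueCoverNumber_le_of_isClique_fiber φ hφ
    _ < Nat.card W := by
      rw [Nat.card_coe_set_eq]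
      exact Set.ncard_lt_card (by simp)

/-- Let `G` be a (house, bull)-free graph, `M` a module of `G`
that is not a stable set, and `k = cc(G[M])`. Then the graph `G_M` obtained by
replacing `M` with a stable set of `k` new vertices is (house, bull)-free and
has fewer vertices than `G`. -/
theorem stmt18 {V : Type*} [Fintype V] (G : SimpleGraph V)
    (hHouse : FreeOf G house) (hBull : FreeOf G bull)
    (M : Set V) (hM : IsModuleSet G M) (hMs : ¬ IsStableSet G M) :
    FreeOf (replaceByStable G M (cliqueCoverNumber (G.induce M))) house ∧
    FreeOf (replaceByStable G M (cliqueCoverNumber (G.induce M))) bull ∧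
    Nat.card ((↥(Mᶜ : Set V)) ⊕ Fin (cliqueCoverNumber (G.induce M))) < Nat.card V := by
  obtain ⟨u, hu, v, hv, -, huv⟩ : ∃ u ∈ M, ∃ v ∈ M, u ≠ v ∧ G.Adj u v := by
    simpa [IsStableSet, Set.Pairwise] using hMs
  have hcc : cliqueCoverNumber (G.induce M) < Nat.card M :=
    cliqueCoverNumber_lt_card (u := ⟨u, hu⟩) (v := ⟨v, hv⟩) huv
  rw [replaceByStable_eq_comap hM.2.1 hu]
  refine ⟨hHouse.comap house_falseTwinFree _, hBull.comap bull_falseTwinFree _, ?_⟩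
  calc Nat.card (↥(Mᶜ : Set V) ⊕ Fin (cliqueCoverNumber (G.induce M)))
        = Nat.card ↥(Mᶜ : Set V) + cliqueCoverNumber (G.induce M) := by
          rw [Nat.card_sum, Nat.card_fin]
    _ < Nat.card ↥(Mᶜ : Set V) + Nat.card M := by omega
    _ = Nat.card V := by
          rw [add_comm, ← Nat.card_sum]
          classical exact Nat.card_congr (Equiv.sumCompl (· ∈ M))
end

section
/- Let G be a graph and let M be a homogeneous set of G, and let k = cc(G[M]). Let G_M be the graph obtained from G by deleting M and adding a stable set S_M of k new vertices, each adjacent exactly to those vertices of V(G)∖M that are complete to M in G. Then cc(G_M) = cc(G). -/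
open SimpleGraph

/-!
A clique cover of `G` is a proper colouring of `Gᶜ`, the cliques being the colour classes.
If `c` colours `Gᶜ`, the colours it uses on `M` colour `G[M]ᶜ`, so there are at least `cc(G[M])`
of them, and giving the new vertices distinct colours among them colours `G_Mᶜ`: a vertex
outside `M` sharing a colour with a vertex of `M` is adjacent to it, hence complete to `M`.
Conversely, given colourings of `G_Mᶜ` and of `G[M]ᶜ` with `k` colours, give each vertex of `M`
the colour of the new vertex indexed by its own colour in `G[M]ᶜ`.
-/

namespace SimpleGraph

variable {V α : Type*} {G : SimpleGraph V} {M : Set V} {k n : ℕ}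

theorem Coloring.adj_of_compl_of_eq (c : Gᶜ.Coloring α) {v w : V} (hne : v ≠ w)
    (h : c v = c w) : G.Adj v w := by
  by_contra hvw
  exact c.valid ((compl_adj G v w).2 ⟨hne, hvw⟩) h

def Coloring.mkCompl (f : V → α) (hf : ∀ ⦃v w⦄, v ≠ w → f v = f w → G.Adj v w) :
    Gᶜ.Coloring α :=
  Coloring.mk f fun hvw heq => ((compl_adj G _ _).1 hvw).2 (hf ((compl_adj G _ _).1 hvw).1 heq)

theorem isCliqueCover_parts (P : Gᶜ.Partition) : IsCliqueCover G P.parts :=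
  ⟨P.isPartition, fun Q hQ v hv w hw hne =>
    by_contra fun h => P.independent Q hQ hv hw hne ((compl_adj G v w).2 ⟨hne, h⟩)⟩

def IsCliqueCover.toPartition {C : Set (Set V)} (hC : IsCliqueCover G C) : Gᶜ.Partition where
  parts := C
  isPartition := hC.1
  independent Q hQ _ hv _ hw hne hadj := ((compl_adj G _ _).1 hadj).2 (hC.2 Q hQ hv hw hne)

theorem cliqueCoverNumber_le_iff [Finite V] : cliqueCoverNumber G ≤ n ↔ Gᶜ.Colorable n := by
  rw [← partitionable_iff_colorable]
  constructor
  · intro h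
    obtain ⟨C, hC, hCn⟩ := Nat.sInf_mem
      (⟨_, (default : Gᶜ.Partition).parts, isCliqueCover_parts default, rfl⟩ :
        {n | ∃ C : Set (Set V), IsCliqueCover G C ∧ C.ncard = n}.Nonempty)
    exact ⟨hC.toPartition, C.toFinite, (Set.ncard_eq_toFinset_card C).symm.le.trans (hCn ▸ h)⟩
  · rintro ⟨P, hfin, hcard⟩
    exact (Nat.sInf_le (⟨P.parts, isCliqueCover_parts P, rfl⟩ :
      P.parts.ncard ∈ {n | ∃ C : Set (Set V), IsCliqueCover G C ∧ C.ncard = n})).trans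
      ((Set.ncard_eq_toFinset_card _ hfin).trans_le hcard)

theorem cliqueCoverNumber_induce_le_ncard_image [Finite V] (c : Gᶜ.Coloring α) (M : Set V) :
    cliqueCoverNumber (G.induce M) ≤ (c '' M).ncard := by
  have := Fintype.ofFinite ↥(c '' M)
  let cM : (G.induce M)ᶜ.Coloring ↥(c '' M) :=
    Coloring.mkCompl (fun m => ⟨c m, Set.mem_image_of_mem c m.2⟩) fun m m' hne heq =>
      c.adj_of_compl_of_eq (Subtype.val_injective.ne hne) (congrArg Subtype.val heq)
  rw [cliqueCoverNumber_le_iff, ← Nat.card_coe_set_eq, Nat.card_eq_fintype_card]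
  exact cM.colorable

theorem IsHomogSet.forall_adj_of_adj (hM : IsHomogSet G M) {v m : V} (hv : v ∉ M) (hm : m ∈ M)
    (h : G.Adj v m) : ∀ m' ∈ M, G.Adj v m' :=
  (hM v hv).resolve_right fun hanti => hanti m hm h

theorem IsHomogSet.adj_of_compl_of_eq (hM : IsHomogSet G M) (c : Gᶜ.Coloring α) {v m : V}
    (hv : v ∉ M) (hm : m ∈ M) (h : c v = c m) : ∀ m' ∈ M, G.Adj v m' :=
  hM.forall_adj_of_adj hv hm (c.adj_of_compl_of_eq (ne_of_mem_of_not_mem hm hv).symm h)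

def Coloring.toReplaceByStable (hM : IsHomogSet G M) (c : Gᶜ.Coloring α) (ι : Fin k → α)
    (hι : ι.Injective) (hιM : ∀ i, ι i ∈ c '' M) : (replaceByStable G M k)ᶜ.Coloring α :=
  Coloring.mkCompl (Sum.elim (fun a => c a) ι) <| by
    rintro (a | i) (b | j) hne heq
    · exact c.adj_of_compl_of_eq (fun h => hne (congrArg Sum.inl (Subtype.ext h))) heq
    · obtain ⟨m, hm, hcm⟩ := hιM j
      exact hM.adj_of_compl_of_eq c a.2 hm (heq.trans hcm.symm)
    · obtain ⟨m, hm, hcm⟩ := hιM i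
      exact hM.adj_of_compl_of_eq c b.2 hm (heq.symm.trans hcm.symm)
    · exact hne (congrArg Sum.inr (hι heq))

open Classical in
noncomputable def Coloring.ofReplaceByStable (d : (replaceByStable G M k)ᶜ.Coloring α)
    (e : (G.induce M)ᶜ.Coloring (Fin k)) : Gᶜ.Coloring α :=
  Coloring.mkCompl (fun v => if h : v ∈ M then d (.inr (e ⟨v, h⟩)) else d (.inl ⟨v, h⟩)) <| by
    intro u v hne heq
    by_cases hu : u ∈ M <;> by_cases hv : v ∈ M <;> simp only [hu, hv, dif_pos] at heq
    · by_cases he : e ⟨u, hu⟩ = e ⟨v, hv⟩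
      · exact e.adj_of_compl_of_eq (fun h => hne (congrArg Subtype.val h)) he
      · exact (d.adj_of_compl_of_eq (fun h => he (Sum.inr.inj h)) heq).elim
    · exact (d.adj_of_compl_of_eq Sum.inr_ne_inl heq u hu).symm
    · exact d.adj_of_compl_of_eq Sum.inl_ne_inr heq v hv
    · exact d.adj_of_compl_of_eq (fun h => hne (congrArg Subtype.val (Sum.inl.inj h))) heq

theorem Colorable.compl_replaceByStable [Finite V] (hM : IsHomogSet G M)
    (hk : k ≤ cliqueCoverNumber (G.induce M)) (hG : Gᶜ.Colorable n) :
    (replaceByStable G M k)ᶜ.Colorable n := by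
  obtain ⟨c⟩ := hG
  have := Fintype.ofFinite ↥(c '' M)
  obtain ⟨ι⟩ : Nonempty (Fin k ↪ ↥(c '' M)) := Function.Embedding.nonempty_of_card_le <| by
    rw [Fintype.card_fin, Fintype.card_eq_nat_card, Nat.card_coe_set_eq]
    exact hk.trans (cliqueCoverNumber_induce_le_ncard_image c M)
  exact ⟨c.toReplaceByStable hM (Subtype.val ∘ ι) (Subtype.val_injective.comp ι.injective)
    fun i => (ι i).2⟩

theorem Colorable.compl_of_replaceByStable (hk : (G.induce M)ᶜ.Colorable k)
    (hG : (replaceByStable G M k)ᶜ.Colorable n) : Gᶜ.Colorable n :=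
  let ⟨e⟩ := hk
  let ⟨d⟩ := hG
  ⟨d.ofReplaceByStable e⟩

end SimpleGraph

/-- Let `M` be a homogeneous set of a graph `G`, let
`k = cc(G[M])`, and let `G_M` be the graph obtained by deleting `M` and adding
a stable set of `k` new vertices adjacent exactly to the vertices of `V ∖ M`
complete to `M`. Then `cc(G_M) = cc(G)`. -/
theorem stmt19 {V : Type*} [Fintype V] (G : SimpleGraph V) (M : Set V)
    (hM : IsHomogSet G M) :
    cliqueCoverNumber (replaceByStable G M (cliqueCoverNumber (G.induce M))) =
      cliqueCoverNumber G := by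
  apply le_antisymm
  · exact cliqueCoverNumber_le_iff.2
      ((cliqueCoverNumber_le_iff.1 le_rfl).compl_replaceByStable hM le_rfl)
  · exact cliqueCoverNumber_le_iff.2
      ((cliqueCoverNumber_le_iff.1 le_rfl).compl_of_replaceByStable
        (cliqueCoverNumber_le_iff.1 le_rfl))
end
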